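/- arXiv:1903.03037 — 2 statements merged into one kernel-verified Lean document; each statement's English description precedes it below -/
import Mathlib

section
/- If p is analytic on the open unit disk with p(0) = 1 and Re(p(z)) > 0 on the disk, with Taylor expansion p(z) = 1 + c₁z + c₂z² + ⋯, then for any complex number ν one has |c₂ − ν c₁²| ≤ 2 · max{1, |2ν − 1|}. -/
/-!
On a circle `|z| = r < 1` the weight `u = Re p` is nonnegative, and Cauchy's formula gives its
moments `avg u = 1`, `avg z⁻¹ u = c₁ / 2`, `avg z⁻² u = c₂ / 2`: since `z⁻¹ = conj z / r²` there,
the half `conj p / 2` of `u` only contributes averages of `zⁿ p` with `n ≥ 1`, which vanish.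
For `g = z⁻¹ - c₁ / 2` the inequality `‖avg (g² u)‖ ≤ avg (‖g‖² u)` then reads
`‖c₂ - c₁² / 2‖ ≤ 2 / r² - ‖c₁‖² / 2`. Letting `r → 1` gives `‖c₂ - c₁² / 2‖ ≤ 2 - ‖c₁‖² / 2`
(so in particular `‖c₁‖ ≤ 2`), and the bound for `c₂ - ν c₁² = (c₂ - c₁² / 2) - (2ν - 1) c₁² / 2`
follows from the triangle inequality.
-/

open Complex Metric Real Filter Topology
open scoped ComplexConjugate Nat

section CircleAverage

variable {E : Type*} [NormedAddCommGroup E] [NormedSpace ℝ E] {c : ℂ} {R : ℝ}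

theorem norm_circleAverage_le (f : ℂ → E) :
    ‖circleAverage f c R‖ ≤ circleAverage (fun z ↦ ‖f z‖) c R := by
  rw [circleAverage_def, circleAverage_def, norm_smul, smul_eq_mul,
    Real.norm_of_nonneg (by positivity)]
  gcongr
  exact intervalIntegral.norm_integral_le_integral_norm two_pi_pos.le

theorem circleAverage_conj (f : ℂ → ℂ) :
    circleAverage (fun z ↦ conj (f z)) c R = conj (circleAverage f c R) := by
  simp only [circleAverage_def, intervalIntegral.integral_of_le two_pi_pos.le, integral_conj,
    Complex.real_smul, map_mul, conj_ofReal]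

theorem ofReal_circleAverage (f : ℂ → ℝ) :
    ((circleAverage f c R : ℝ) : ℂ) = circleAverage (fun z ↦ (f z : ℂ)) c R := by
  simp only [circleAverage_def, intervalIntegral.integral_ofReal, Complex.real_smul, smul_eq_mul,
    ofReal_mul]

theorem norm_circleAverage_sq_mul_le {u : ℂ → ℝ} (hu : ∀ z ∈ sphere c |R|, 0 ≤ u z)
    (g : ℂ → ℂ) :
    ‖circleAverage (fun z ↦ g z ^ 2 * u z) c R‖ ≤ circleAverage (fun z ↦ ‖g z‖ ^ 2 * u z) c R :=
  (norm_circleAverage_le _).trans_eq <| circleAverage_congr_sphere fun z hz ↦ by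
    simp [norm_real, abs_of_nonneg (hu z hz)]

end CircleAverage

section Coefficients

variable {f : ℂ → ℂ} {r : ℝ}

theorem DifferentiableOn.circleAverage_inv_pow_mul (hf : DifferentiableOn ℂ f (closedBall 0 r))
    (hr : 0 < r) (n : ℕ) :
    circleAverage (fun z ↦ z⁻¹ ^ n * f z) 0 r = iteratedDeriv n f 0 / n ! := by
  have hcauchy := hf.circleIntegral_one_div_sub_center_pow_smul hr n
  rw [circleAverage_eq_circleIntegral hr.ne']
  simp only [sub_zero, smul_eq_mul, one_div] at hcauchy ⊢
  simp_rw [← mul_assoc, ← pow_succ', inv_pow, hcauchy]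
  field_simp

theorem DifferentiableOn.circleAverage_pow_succ_mul (hf : DifferentiableOn ℂ f (closedBall 0 r))
    (hr : 0 < r) (n : ℕ) : circleAverage (fun z ↦ z ^ (n + 1) * f z) 0 r = 0 := by
  have hg : DifferentiableOn ℂ (fun z ↦ z ^ (n + 1) * f z) (closedBall 0 |r|) := by
    rw [abs_of_pos hr]
    fun_prop
  simpa using (hg.mono closure_ball_subset_closedBall).diffContOnCl.circleAverage

theorem DifferentiableOn.circleAverage_re (hf : DifferentiableOn ℂ f (closedBall 0 r))
    (hr : 0 < r) : circleAverage (fun z ↦ (f z).re) 0 r = (f 0).re := by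
  have hint : CircleIntegrable f 0 r :=
    (hf.continuousOn.mono sphere_subset_closedBall).circleIntegrable hr.le
  have hmean := hf.circleAverage_inv_pow_mul hr 0
  simp only [pow_zero, one_mul, iteratedDeriv_zero, Nat.factorial_zero, Nat.cast_one,
    div_one] at hmean
  simpa [Function.comp_def, hmean] using reCLM.circleAverage_comp_comm hint

theorem conj_eq_sq_mul_inv_of_mem_sphere {z : ℂ} (hr : 0 < r) (hz : z ∈ sphere 0 |r|) :
    conj z = r ^ 2 * z⁻¹ := by
  have hz0 : z ≠ 0 := ne_of_mem_sphere hz (by positivity)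
  rw [mem_sphere_zero_iff_norm, abs_of_pos hr] at hz
  rw [eq_mul_inv_iff_mul_eq₀ hz0, mul_comm, mul_conj', hz]

theorem DifferentiableOn.circleAverage_inv_pow_succ_mul_re
    (hf : DifferentiableOn ℂ f (closedBall 0 r)) (hr : 0 < r) (n : ℕ) :
    circleAverage (fun z ↦ z⁻¹ ^ (n + 1) * ((f z).re : ℂ)) 0 r
      = iteratedDeriv (n + 1) f 0 / (n + 1)! / 2 := by
  have hsphere : ∀ z ∈ sphere (0 : ℂ) |r|, z⁻¹ ^ (n + 1) * ((f z).re : ℂ)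
      = (2 : ℂ)⁻¹ • (z⁻¹ ^ (n + 1) * f z)
        + (2 * ((r : ℂ) ^ 2) ^ (n + 1))⁻¹ • conj (z ^ (n + 1) * f z) := by
    intro z hz
    have hz0 : z ≠ 0 := ne_of_mem_sphere hz (by positivity)
    have hr0 : (r : ℂ) ≠ 0 := ofReal_ne_zero.mpr hr.ne'
    rw [map_mul, map_pow, conj_eq_sq_mul_inv_of_mem_sphere hr hz, re_eq_add_conj, mul_pow,
      smul_eq_mul, smul_eq_mul]
    have hrn : ((r : ℂ) ^ 2) ^ (n + 1) ≠ 0 := by positivity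
    field_simp
  have hcont : ContinuousOn f (sphere 0 r) := hf.continuousOn.mono sphere_subset_closedBall
  have hinv : ContinuousOn (fun z : ℂ ↦ z⁻¹) (sphere 0 r) :=
    continuousOn_inv₀.mono fun z hz ↦ ne_of_mem_sphere hz hr.ne'
  rw [circleAverage_congr_sphere hsphere, circleAverage_fun_add, circleAverage_fun_smul,
    circleAverage_fun_smul, circleAverage_conj, hf.circleAverage_inv_pow_mul hr,
    hf.circleAverage_pow_succ_mul hr]
  · simp [div_eq_inv_mul]
  all_goals
    apply ContinuousOn.circleIntegrable hr.le
    fun_prop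

end Coefficients

section Weights

variable {u : ℂ → ℝ} {r : ℝ}

theorem circleAverage_inv_sub_sq_mul (hu : ContinuousOn u (sphere 0 r)) (hr : 0 < r) (m : ℂ) :
    circleAverage (fun z ↦ (z⁻¹ - m) ^ 2 * (u z : ℂ)) 0 r
      = circleAverage (fun z ↦ z⁻¹ ^ 2 * (u z : ℂ)) 0 r
        - 2 * m * circleAverage (fun z ↦ z⁻¹ * (u z : ℂ)) 0 r
        + m ^ 2 * circleAverage (fun z ↦ (u z : ℂ)) 0 r := by
  have hinv : ContinuousOn (fun z : ℂ ↦ z⁻¹) (sphere 0 r) :=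
    continuousOn_inv₀.mono fun z hz ↦ ne_of_mem_sphere hz hr.ne'
  have hexpand : (fun z ↦ (z⁻¹ - m) ^ 2 * (u z : ℂ)) = fun z ↦ z⁻¹ ^ 2 * (u z : ℂ)
      - (2 * m) • (z⁻¹ * (u z : ℂ)) + m ^ 2 • (u z : ℂ) := by
    ext z
    simp only [smul_eq_mul]
    ring
  rw [hexpand, circleAverage_fun_add, circleAverage_fun_sub, circleAverage_fun_smul,
    circleAverage_fun_smul, smul_eq_mul, smul_eq_mul]
  all_goals
    apply ContinuousOn.circleIntegrable hr.le
    fun_prop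

theorem circleAverage_norm_inv_sub_sq_mul (hu : ContinuousOn u (sphere 0 r)) (hr : 0 < r)
    (m : ℂ) :
    circleAverage (fun z ↦ ‖z⁻¹ - m‖ ^ 2 * u z) 0 r
      = (r⁻¹ ^ 2 + ‖m‖ ^ 2) * circleAverage u 0 r
        - 2 * (conj m * circleAverage (fun z ↦ z⁻¹ * (u z : ℂ)) 0 r).re := by
  have hinv : ContinuousOn (fun z : ℂ ↦ z⁻¹) (sphere 0 r) :=
    continuousOn_inv₀.mono fun z hz ↦ ne_of_mem_sphere hz hr.ne'
  have hsphere : ∀ z ∈ sphere (0 : ℂ) |r|, ((‖z⁻¹ - m‖ ^ 2 * u z : ℝ) : ℂ)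
      = ((r⁻¹ ^ 2 + ‖m‖ ^ 2 : ℝ) : ℂ) • (u z : ℂ) - conj m • (z⁻¹ * (u z : ℂ))
        - m • conj (z⁻¹ * (u z : ℂ)) := by
    intro z hz
    rw [mem_sphere_zero_iff_norm, abs_of_pos hr] at hz
    have hzz : z⁻¹ * conj z⁻¹ = ((r⁻¹ ^ 2 : ℝ) : ℂ) := by
      rw [mul_conj', norm_inv, hz, ofReal_pow]
    have hmm : m * conj m = ((‖m‖ ^ 2 : ℝ) : ℂ) := by rw [mul_conj', ofReal_pow]
    rw [ofReal_mul, ofReal_pow, ← mul_conj', ofReal_add]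
    simp only [smul_eq_mul, map_sub, map_mul, conj_ofReal]
    linear_combination (u z : ℂ) * (hzz + hmm)
  apply ofReal_injective
  rw [ofReal_circleAverage, circleAverage_congr_sphere hsphere, circleAverage_fun_sub,
    circleAverage_fun_sub, circleAverage_fun_smul, circleAverage_fun_smul, circleAverage_fun_smul,
    circleAverage_conj, ← ofReal_circleAverage]
  · simp only [smul_eq_mul, ofReal_sub, ofReal_mul, ofReal_ofNat, re_eq_add_conj, map_mul,
      conj_conj]
    ring
  all_goals
    apply ContinuousOn.circleIntegrable hr.le
    fun_prop

end Weights

section Caratheodory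

variable {p : ℂ → ℂ}

theorem norm_iteratedDeriv_two_sub_sq_le_of_re_nonneg_on_sphere {r : ℝ}
    (hp : DifferentiableOn ℂ p (closedBall 0 r)) (hr : 0 < r)
    (hre : ∀ z ∈ sphere (0 : ℂ) r, 0 ≤ (p z).re) (hp0 : (p 0).re = 1) :
    ‖iteratedDeriv 2 p 0 / 2 - iteratedDeriv 1 p 0 ^ 2 / 2‖
      ≤ 2 / r ^ 2 - ‖iteratedDeriv 1 p 0‖ ^ 2 / 2 := by
  set c₁ := iteratedDeriv 1 p 0
  set c₂ := iteratedDeriv 2 p 0 / 2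
  set u : ℂ → ℝ := fun z ↦ (p z).re
  have hu : ContinuousOn u (sphere 0 r) :=
    continuous_re.comp_continuousOn (hp.continuousOn.mono sphere_subset_closedBall)
  have hν₀ : circleAverage u 0 r = 1 := by rw [hp.circleAverage_re hr, hp0]
  have hν₁ : circleAverage (fun z ↦ z⁻¹ * (u z : ℂ)) 0 r = c₁ / 2 := by
    simpa only [zero_add, pow_one, Nat.factorial_one, Nat.cast_one, div_one] using
      hp.circleAverage_inv_pow_succ_mul_re hr 0
  have hν₂ : circleAverage (fun z ↦ z⁻¹ ^ 2 * (u z : ℂ)) 0 r = c₂ / 2 := by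
    simpa only [Nat.reduceAdd, Nat.factorial_two, Nat.cast_ofNat] using
      hp.circleAverage_inv_pow_succ_mul_re hr 1
  have hvar := norm_circleAverage_sq_mul_le (u := u) (R := r)
    (fun z hz ↦ hre z (by rwa [abs_of_pos hr] at hz)) (fun z ↦ z⁻¹ - c₁ / 2)
  rw [circleAverage_inv_sub_sq_mul hu hr, circleAverage_norm_inv_sub_sq_mul hu hr,
    ← ofReal_circleAverage, hν₀, hν₁, hν₂] at hvar
  rw [ofReal_one, mul_one, mul_one, conj_mul', ← ofReal_pow, ofReal_re, norm_div,
    RCLike.norm_ofNat] at hvar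
  calc ‖c₂ - c₁ ^ 2 / 2‖ = ‖(2 : ℂ) * (c₂ / 2 - 2 * (c₁ / 2) * (c₁ / 2) + (c₁ / 2) ^ 2)‖ := by
        ring_nf
    _ ≤ 2 * (r⁻¹ ^ 2 + (‖c₁‖ / 2) ^ 2 - 2 * (‖c₁‖ / 2) ^ 2) := by
        rw [norm_mul, RCLike.norm_ofNat]
        gcongr
    _ = 2 / r ^ 2 - ‖c₁‖ ^ 2 / 2 := by ring

theorem norm_iteratedDeriv_two_sub_sq_le_of_re_nonneg (hp : DifferentiableOn ℂ p (ball 0 1))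
    (hre : ∀ z ∈ ball (0 : ℂ) 1, 0 ≤ (p z).re) (hp0 : (p 0).re = 1) :
    ‖iteratedDeriv 2 p 0 / 2 - iteratedDeriv 1 p 0 ^ 2 / 2‖
      ≤ 2 - ‖iteratedDeriv 1 p 0‖ ^ 2 / 2 := by
  set a := ‖iteratedDeriv 1 p 0‖ ^ 2 / 2
  have hlim : Tendsto (fun r : ℝ ↦ 2 / r ^ 2 - a) (𝓝[<] 1) (𝓝 (2 - a)) := by
    have hcont : ContinuousAt (fun r : ℝ ↦ 2 / r ^ 2 - a) 1 := by fun_prop (disch := norm_num)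
    simpa using hcont.tendsto.mono_left nhdsWithin_le_nhds
  refine ge_of_tendsto hlim ?_
  filter_upwards [Ioo_mem_nhdsLT one_pos] with r hr
  have hsub : closedBall (0 : ℂ) r ⊆ ball 0 1 := closedBall_subset_ball hr.2
  exact norm_iteratedDeriv_two_sub_sq_le_of_re_nonneg_on_sphere (hp.mono hsub) hr.1
    (fun z hz ↦ hre z (hsub (sphere_subset_closedBall hz))) hp0

end Caratheodory

theorem norm_sub_mul_sq_le_two_mul_max {a b : ℂ} (h : ‖b - a ^ 2 / 2‖ ≤ 2 - ‖a‖ ^ 2 / 2)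
    (ν : ℂ) : ‖b - ν * a ^ 2‖ ≤ 2 * max 1 ‖2 * ν - 1‖ := by
  have htri : ‖b - ν * a ^ 2‖ ≤ ‖b - a ^ 2 / 2‖ + ‖2 * ν - 1‖ * ‖a‖ ^ 2 / 2 :=
    calc ‖b - ν * a ^ 2‖ = ‖(b - a ^ 2 / 2) - (2 * ν - 1) * a ^ 2 / 2‖ := by ring_nf
      _ ≤ ‖b - a ^ 2 / 2‖ + ‖(2 * ν - 1) * a ^ 2 / 2‖ := norm_sub_le _ _
      _ = ‖b - a ^ 2 / 2‖ + ‖2 * ν - 1‖ * ‖a‖ ^ 2 / 2 := by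
        rw [norm_div, norm_mul, norm_pow, RCLike.norm_ofNat]
  have ha : ‖a‖ ^ 2 ≤ 4 := by nlinarith [norm_nonneg (b - a ^ 2 / 2)]
  rcases le_total ‖2 * ν - 1‖ 1 with hs | hs
  · rw [max_eq_left hs]
    nlinarith [norm_nonneg a]
  · rw [max_eq_right hs]
    nlinarith

/-- For `p` in the Carathéodory class with Taylor coefficients `cₙ`, for any
complex `ν` one has `‖c₂ − ν c₁²‖ ≤ 2 max {1, ‖2ν − 1‖}`. -/
theorem caratheodory_fekete_szego (p : ℂ → ℂ) (c : ℕ → ℂ)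
    (hp : DifferentiableOn ℂ p (Metric.ball 0 1))
    (hp0 : p 0 = 1)
    (hre : ∀ z ∈ Metric.ball (0 : ℂ) 1, 0 < (p z).re)
    (hc : ∀ n, c n = iteratedDeriv n p 0 / n.factorial)
    (ν : ℂ) :
    ‖c 2 - ν * c 1 ^ 2‖ ≤ 2 * max 1 ‖2 * ν - 1‖ := by
  have hc₁ : c 1 = iteratedDeriv 1 p 0 := by simp [hc]
  have hc₂ : c 2 = iteratedDeriv 2 p 0 / 2 := by simp [hc, Nat.factorial]
  rw [hc₁, hc₂]
  exact norm_sub_mul_sq_le_two_mul_max (norm_iteratedDeriv_two_sub_sq_le_of_re_nonneg hp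
    (fun z hz ↦ (hre z hz).le) (by simp [hp0])) ν
end

section
/- Let 0 ≤ β < 1 and let f(z) = z + a₂z² + a₃z³ + ⋯ be starlike of order β on the unit disk. Then for any real number μ, |a₃ − μ a₂²| ≤ (1 − β) · max{1, |3 − 2β − 4μ(1 − β)|}. -/
/-!
Write `f = z g` with `g = dslope f 0`. Then `z f'/f = 1 + z g'/g`, so with `γ = 1 - β` the
function `q = z g'/g` satisfies `Re q > -γ`, i.e. `|q| < |q + 2γ|`. Hence
`φ = g' / (z g' + 2γ g)` is such that `z φ = q / (q + 2γ)` maps the disk into itself and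
vanishes at `0`; by Schwarz's lemma `φ` maps the disk into the closed disk, and Schwarz–Pick
gives `|c₂| ≤ 1 - |c₁|²` for `c₁ = φ 0`, `c₂ = φ' 0`. Differentiating `φ (z g' + 2γ g) = g'`
at `0` yields `a₂ = 2γ c₁` and `a₃ = γ (c₂ + (1 + 2γ) c₁²)`, so
`a₃ - μ a₂² = γ (c₂ + s c₁²)` with `s = 3 - 2β - 4μγ`, and
`|c₂ + s c₁²| ≤ (1 - |c₁|²) + |s| |c₁|² ≤ max 1 |s|`.
-/

open Metric Set Filter
open scoped Topology ComplexConjugate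

section DSlope

variable {𝕜 : Type*} [NontriviallyNormedField 𝕜]

theorem eq_fun_mul_dslope_zero {f : 𝕜 → 𝕜} (hf0 : f 0 = 0) : f = fun z => z * dslope f 0 z :=
  funext fun z => by simpa [hf0] using (sub_smul_dslope f 0 z).symm

theorem dslope_fun_mul_zero {φ : 𝕜 → 𝕜} (hφ : DifferentiableAt 𝕜 φ 0) :
    dslope (fun z => z * φ z) 0 = φ := by
  funext z
  rcases eq_or_ne z 0 with rfl | hz
  · rw [dslope_same, deriv_fun_mul differentiableAt_fun_id hφ]
    simp
  · simpa using dslope_sub_smul_of_ne φ hz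

theorem iteratedDeriv_succ_fun_mul_zero {g : 𝕜 → 𝕜} {n : ℕ}
    (hg : ContDiffAt 𝕜 (n + 1 : ℕ) g 0) :
    iteratedDeriv (n + 1) (fun z => z * g z) 0 = (n + 1) * iteratedDeriv n g 0 := by
  rw [iteratedDeriv_fun_mul contDiffAt_fun_id hg, Finset.sum_eq_single 1]
  · simp
  · intro i _ hi
    simp [iteratedDeriv_fun_id_zero, hi]
  · simp

end DSlope

namespace Complex

theorem norm_sub_le_norm_one_sub_conj_mul {u w : ℂ} (hu : ‖u‖ ≤ 1) (hw : ‖w‖ ≤ 1) :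
    ‖u - w‖ ≤ ‖1 - conj w * u‖ := by
  have key : ‖1 - conj w * u‖ ^ 2 - ‖u - w‖ ^ 2 = (1 - ‖u‖ ^ 2) * (1 - ‖w‖ ^ 2) := by
    simp only [Complex.sq_norm, normSq_apply, sub_re, sub_im, mul_re, mul_im, one_re, one_im,
      conj_re, conj_im]
    ring
  have hprod : 0 ≤ (1 - ‖u‖ ^ 2) * (1 - ‖w‖ ^ 2) :=
    mul_nonneg (by nlinarith [norm_nonneg u]) (by nlinarith [norm_nonneg w])
  exact (pow_le_pow_iff_left₀ (norm_nonneg _) (norm_nonneg _) two_ne_zero).1 (by linarith)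

theorem one_sub_conj_mul_ne_zero {u w : ℂ} (hu : ‖u‖ ≤ 1) (hw : ‖w‖ < 1) :
    1 - conj w * u ≠ 0 := by
  rw [sub_ne_zero]
  intro h
  have := congrArg norm h
  rw [norm_mul, RCLike.norm_conj, norm_one] at this
  nlinarith [norm_nonneg u, norm_nonneg w]

theorem norm_lt_norm_add_two_mul_of_neg_lt_re {γ : ℝ} (hγ : 0 < γ) {q : ℂ}
    (hq : -γ < q.re) : ‖q‖ < ‖q + 2 * γ‖ := by
  have key : ‖q + 2 * γ‖ ^ 2 - ‖q‖ ^ 2 = 4 * γ * (q.re + γ) := by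
    simp only [Complex.sq_norm, normSq_apply, add_re, add_im, mul_re, mul_im, ofReal_re, ofReal_im,
      re_ofNat, im_ofNat]
    ring
  have : 0 < 4 * γ * (q.re + γ) := by nlinarith
  exact (pow_lt_pow_iff_left₀ (norm_nonneg _) (norm_nonneg _) two_ne_zero).1 (by linarith)

theorem norm_add_mul_sq_le_max {c₁ c₂ s : ℂ} (hc : ‖c₂‖ ≤ 1 - ‖c₁‖ ^ 2) :
    ‖c₂ + s * c₁ ^ 2‖ ≤ max 1 ‖s‖ := by
  have hc₁ : 0 ≤ 1 - ‖c₁‖ ^ 2 := (norm_nonneg c₂).trans hc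
  calc ‖c₂ + s * c₁ ^ 2‖ ≤ (1 - ‖c₁‖ ^ 2) * 1 + ‖c₁‖ ^ 2 * ‖s‖ := by
        grw [norm_add_le, norm_mul, norm_pow, hc]; ring_nf; rfl
    _ ≤ (1 - ‖c₁‖ ^ 2) * max 1 ‖s‖ + ‖c₁‖ ^ 2 * max 1 ‖s‖ := by
        gcongr
        exacts [le_max_left _ _, le_max_right _ _]
    _ = max 1 ‖s‖ := by ring

theorem deriv_eq_zero_of_isMaxOn_norm {F : Type*} [NormedAddCommGroup F] [NormedSpace ℂ F]
    [StrictConvexSpace ℝ F] {φ : ℂ → F} {c : ℂ} {r : ℝ} (hr : 0 < r)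
    (hd : DifferentiableOn ℂ φ (ball c r)) (hmax : IsMaxOn (norm ∘ φ) (ball c r) c) :
    deriv φ c = 0 := by
  have hconst : EqOn φ (Function.const ℂ (φ c)) (ball c r) :=
    eqOn_of_isPreconnected_of_isMaxOn_norm (convex_ball c r).isPreconnected isOpen_ball hd
      (mem_ball_self hr) hmax
  rw [(hconst.eventuallyEq_of_mem (isOpen_ball.mem_nhds (mem_ball_self hr))).deriv_eq]
  exact deriv_const c (φ c)

section SchwarzPick

variable {φ : ℂ → ℂ}

theorem norm_deriv_le_one_sub_sq_norm_of_norm_lt_one (hd : DifferentiableOn ℂ φ (ball 0 1))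
    (hmaps : MapsTo φ (ball 0 1) (closedBall 0 1)) (hlt : ‖φ 0‖ < 1) :
    ‖deriv φ 0‖ ≤ 1 - ‖φ 0‖ ^ 2 := by
  set w := φ 0 with hw
  have h0 : (0 : ℂ) ∈ ball (0 : ℂ) 1 := mem_ball_self one_pos
  have hle : ∀ z ∈ ball (0 : ℂ) 1, ‖φ z‖ ≤ 1 := fun z hz => by simpa using hmaps hz
  have hden : ∀ z ∈ ball (0 : ℂ) 1, 1 - conj w * φ z ≠ 0 := fun z hz =>
    one_sub_conj_mul_ne_zero (hle z hz) hlt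
  set h : ℂ → ℂ := fun z => (φ z - w) / (1 - conj w * φ z)
  have hhd : DifferentiableOn ℂ h (ball 0 1) :=
    (hd.sub_const w).div ((differentiableOn_const _).sub (hd.const_mul _)) hden
  have hh : MapsTo h (ball 0 1) (closedBall (h 0) 1) := fun z hz => by
    simp only [h, ← hw, sub_self, zero_div, mem_closedBall_zero_iff, norm_div]
    exact div_le_one_of_le₀ (norm_sub_le_norm_one_sub_conj_mul (hle z hz) hlt.le) (norm_nonneg _)
  have hφd : DifferentiableAt ℂ φ 0 := hd.differentiableAt (isOpen_ball.mem_nhds h0)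
  have hderiv : deriv h 0 = deriv φ 0 / ((1 - ‖w‖ ^ 2 : ℝ) : ℂ) := by
    rw [deriv_fun_div (hφd.sub_const w) ((hφd.const_mul _).const_sub 1) (hden 0 h0),
      deriv_const_sub, deriv_const_mul _ hφd, deriv_sub_const, ← hw, sub_self, zero_mul,
      sub_zero, conj_mul']
    push_cast
    field_simp
  have hpos : 0 < 1 - ‖w‖ ^ 2 := by nlinarith [norm_nonneg w]
  have := norm_deriv_le_one_of_mapsTo_ball hhd hh one_pos
  rwa [hderiv, norm_div, norm_real, Real.norm_of_nonneg hpos.le, div_le_one hpos] at this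

theorem norm_deriv_le_one_sub_sq_norm (hd : DifferentiableOn ℂ φ (ball 0 1))
    (hmaps : MapsTo φ (ball 0 1) (closedBall 0 1)) : ‖deriv φ 0‖ ≤ 1 - ‖φ 0‖ ^ 2 := by
  rcases (show ‖φ 0‖ ≤ 1 by simpa using hmaps (mem_ball_self one_pos)).eq_or_lt with h1 | hlt
  · have hmax : IsMaxOn (norm ∘ φ) (ball 0 1) 0 := fun z hz => by simpa [h1] using hmaps hz
    simp [deriv_eq_zero_of_isMaxOn_norm one_pos hd hmax, h1]
  · exact norm_deriv_le_one_sub_sq_norm_of_norm_lt_one hd hmaps hlt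

end SchwarzPick

section LogDeriv

variable {γ : ℝ} {g : ℂ → ℂ} {z : ℂ}

theorem mul_deriv_eq_mul_logDeriv_mul (hz : g z ≠ 0) :
    z * deriv g z = z * logDeriv g z * g z := by
  rw [logDeriv_apply]
  field_simp

theorem mul_deriv_add_ne_zero (hγ : 0 < γ) (hz : g z ≠ 0) (hre : -γ < (z * logDeriv g z).re) :
    z * deriv g z + 2 * γ * g z ≠ 0 := by
  rw [mul_deriv_eq_mul_logDeriv_mul hz, ← add_mul]
  refine mul_ne_zero (norm_pos_iff.1 ?_) hz
  exact (norm_nonneg _).trans_lt (norm_lt_norm_add_two_mul_of_neg_lt_re hγ hre)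

theorem norm_mul_deriv_div_lt_one (hγ : 0 < γ) (hz : g z ≠ 0)
    (hre : -γ < (z * logDeriv g z).re) :
    ‖z * deriv g z / (z * deriv g z + 2 * γ * g z)‖ < 1 := by
  rw [norm_div, div_lt_one (norm_pos_iff.2 (mul_deriv_add_ne_zero hγ hz hre)),
    mul_deriv_eq_mul_logDeriv_mul hz, ← add_mul, norm_mul _ (g z), norm_mul _ (g z)]
  exact mul_lt_mul_of_pos_right (norm_lt_norm_add_two_mul_of_neg_lt_re hγ hre)
    (norm_pos_iff.2 hz)

theorem exists_coeffs_of_neg_lt_re_mul_logDeriv (hγ : 0 < γ)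
    (hg : DifferentiableOn ℂ g (ball 0 1)) (hg0 : g 0 = 1)
    (hgne : ∀ z ∈ ball (0 : ℂ) 1, g z ≠ 0)
    (hre : ∀ z ∈ ball (0 : ℂ) 1, -γ < (z * logDeriv g z).re) :
    ∃ c₁ c₂ : ℂ, ‖c₂‖ ≤ 1 - ‖c₁‖ ^ 2 ∧ deriv g 0 = 2 * γ * c₁ ∧
      deriv (deriv g) 0 = 2 * γ * (c₂ + (1 + 2 * γ) * c₁ ^ 2) := by
  have hnhds : ball (0 : ℂ) 1 ∈ 𝓝 0 := isOpen_ball.mem_nhds (mem_ball_self one_pos)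
  set E : ℂ → ℂ := fun z => z * deriv g z + 2 * γ * g z
  have hEne : ∀ z ∈ ball (0 : ℂ) 1, E z ≠ 0 := fun z hz =>
    mul_deriv_add_ne_zero hγ (hgne z hz) (hre z hz)
  have hg' : DifferentiableOn ℂ (deriv g) (ball 0 1) := hg.deriv isOpen_ball
  have hEd : DifferentiableOn ℂ E (ball 0 1) :=
    (differentiableOn_id.mul hg').add (hg.const_mul _)
  set φ : ℂ → ℂ := fun z => deriv g z / E z
  have hφd : DifferentiableOn ℂ φ (ball 0 1) := hg'.div hEd hEne
  have hφ : MapsTo φ (ball 0 1) (closedBall 0 1) := by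
    have hω : MapsTo (fun z => z * φ z) (ball 0 1) (closedBall 0 1) := fun z hz => by
      simpa only [mem_closedBall_zero_iff, φ, E, mul_div_assoc] using
        (norm_mul_deriv_div_lt_one hγ (hgne z hz) (hre z hz)).le
    intro z hz
    simpa [dslope_fun_mul_zero (hφd.differentiableAt hnhds)] using
      norm_dslope_le_div_of_mapsTo_ball (differentiableOn_id.fun_mul hφd) (by simpa using hω) hz
  have hE0 : E 0 = 2 * γ := by simp [E, hg0]
  have hc₁ : deriv g 0 = 2 * γ * φ 0 := by
    simp only [φ, hE0]
    field_simp [hγ.ne']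
  refine ⟨φ 0, deriv φ 0, norm_deriv_le_one_sub_sq_norm hφd hφ, hc₁, ?_⟩
  have hφE : (fun z => φ z * E z) =ᶠ[𝓝 0] deriv g :=
    eventually_of_mem hnhds fun z hz => div_mul_cancel₀ _ (hEne z hz)
  have hdE : deriv E 0 = (1 + 2 * γ) * deriv g 0 := by
    have hgd := hg.differentiableAt hnhds
    rw [deriv_fun_add (differentiableAt_fun_id.fun_mul (hg'.differentiableAt hnhds))
      (hgd.const_mul _), deriv_fun_mul differentiableAt_fun_id (hg'.differentiableAt hnhds),
      deriv_const_mul _ hgd]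
    simp only [deriv_id'', one_mul, zero_mul, add_zero]
    ring
  rw [← hφE.deriv_eq, deriv_fun_mul (hφd.differentiableAt hnhds) (hEd.differentiableAt hnhds),
    hdE, hE0, hc₁]
  ring

end LogDeriv

end Complex

section Starlike

variable {β : ℝ} {f : ℂ → ℂ}

theorem dslope_ne_zero_of_starlike (hβ : 0 ≤ β) (hf0 : f 0 = 0) (hf1 : deriv f 0 = 1)
    (hstar : ∀ z ∈ ball (0 : ℂ) 1, z ≠ 0 → β < (z * deriv f z / f z).re) :
    ∀ z ∈ ball (0 : ℂ) 1, dslope f 0 z ≠ 0 := by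
  intro z hz hgz
  rcases eq_or_ne z 0 with rfl | hz0
  · simp [dslope_same, hf1] at hgz
  -- Since `x / 0 = 0`, at a zero `z ≠ 0` of `f` the hypothesis `hstar` reads `β < 0`.
  · have := hstar z hz hz0
    rw [eq_fun_mul_dslope_zero hf0] at this
    simp [hgz] at this
    linarith

theorem neg_lt_re_mul_logDeriv_dslope_of_starlike (hβ : 0 ≤ β) (hβ1 : β < 1)
    (hf : DifferentiableOn ℂ f (ball 0 1)) (hf0 : f 0 = 0) (hf1 : deriv f 0 = 1)
    (hstar : ∀ z ∈ ball (0 : ℂ) 1, z ≠ 0 → β < (z * deriv f z / f z).re) :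
    ∀ z ∈ ball (0 : ℂ) 1, -(1 - β) < (z * logDeriv (dslope f 0) z).re := by
  intro z hz
  rcases eq_or_ne z 0 with rfl | hz0
  · simpa using hβ1
  have hg : DifferentiableAt ℂ (dslope f 0) z :=
    (Complex.differentiableOn_dslope (isOpen_ball.mem_nhds (mem_ball_self one_pos))).2 hf
      |>.differentiableAt (isOpen_ball.mem_nhds hz)
  have hlog : z * deriv f z / f z = 1 + z * logDeriv (dslope f 0) z := by
    rw [mul_div_assoc, ← logDeriv_apply]
    conv_lhs => rw [eq_fun_mul_dslope_zero hf0]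
    rw [logDeriv_mul z hz0 (dslope_ne_zero_of_starlike hβ hf0 hf1 hstar z hz)
        differentiableAt_fun_id hg,
      logDeriv_id', mul_add, mul_one_div_cancel hz0]
  have := hstar z hz hz0
  rw [hlog, Complex.add_re, Complex.one_re] at this
  linarith

end Starlike

/-- Fekete–Szegő inequality for starlike functions of order `β`:
`|a₃ − μ a₂²| ≤ (1−β) max {1, |3 − 2β − 4μ(1−β)|}` for real `μ`. -/
theorem starlike_fekete_szego (β : ℝ) (hβ : 0 ≤ β) (hβ1 : β < 1)
    (f : ℂ → ℂ) (a : ℕ → ℂ)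
    (hf : DifferentiableOn ℂ f (Metric.ball 0 1))
    (hf0 : f 0 = 0) (hf1 : deriv f 0 = 1)
    (hstar : ∀ z ∈ Metric.ball (0 : ℂ) 1, z ≠ 0 → β < (z * deriv f z / f z).re)
    (ha : ∀ n, a n = iteratedDeriv n f 0 / n.factorial)
    (μ : ℝ) :
    ‖a 3 - (μ : ℂ) * a 2 ^ 2‖ ≤
      (1 - β) * max 1 |3 - 2 * β - 4 * μ * (1 - β)| := by
  set g := dslope f 0
  have hg : DifferentiableOn ℂ g (ball 0 1) :=
    (Complex.differentiableOn_dslope (isOpen_ball.mem_nhds (mem_ball_self one_pos))).2 hf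
  obtain ⟨c₁, c₂, hc, hg1, hg2⟩ := Complex.exists_coeffs_of_neg_lt_re_mul_logDeriv
    (sub_pos.2 hβ1) hg ((dslope_same f 0).trans hf1) (dslope_ne_zero_of_starlike hβ hf0 hf1 hstar)
    (neg_lt_re_mul_logDeriv_dslope_of_starlike hβ hβ1 hf hf0 hf1 hstar)
  have hcoeff : ∀ n, a (n + 1) = iteratedDeriv n g 0 / n.factorial := fun n => by
    rw [ha, eq_fun_mul_dslope_zero hf0, iteratedDeriv_succ_fun_mul_zero
      ((hg.analyticOnNhd isOpen_ball 0 (mem_ball_self one_pos)).contDiffAt), Nat.factorial_succ]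
    push_cast
    field_simp
  have ha2 : a 2 = deriv g 0 := by simpa using hcoeff 1
  have ha3 : a 3 = deriv (deriv g) 0 / 2 := by simpa [iteratedDeriv_succ] using hcoeff 2
  have hkey : a 3 - (μ : ℂ) * a 2 ^ 2 =
      (1 - β : ℝ) * (c₂ + (3 - 2 * β - 4 * μ * (1 - β) : ℝ) * c₁ ^ 2) := by
    rw [ha3, ha2, hg1, hg2]
    push_cast
    ring
  rw [hkey, norm_mul, Complex.norm_real, Real.norm_of_nonneg (sub_nonneg.2 hβ1.le)]
  gcongr
  simpa only [Complex.norm_real, Real.norm_eq_abs] using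
    Complex.norm_add_mul_sq_le_max (s := ((3 - 2 * β - 4 * μ * (1 - β) : ℝ) : ℂ)) hc
end
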